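/- arXiv:2407.18027 — 7 statements merged into one kernel-verified Lean document; each statement's English description precedes it below -/
import Mathlib

section
/- Let G be a group normally generated by a subset S (i.e. the conjugates of elements of S ∪ S⁻¹ generate G), equipped with the associated conjugation-invariant word norm ‖·‖_S and bi-invariant metric d_S(g,h) = ‖g·h⁻¹‖_S. If ψ : G → ℝ is a homogeneous quasi-morphism with defect at most D and |ψ(s)| ≤ B for all s ∈ S, then |ψ(g) − ψ(h)| ≤ (B + 2D)·d_S(g,h) for all g,h ∈ G; in particular ψ is Lipschitz. -/
/-- The set of conjugates of elements of `S ∪ S⁻¹`. -/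
def conjGens {G : Type*} [Group G] (S : Set G) : Set G :=
  {x | ∃ g s : G, (s ∈ S ∨ s⁻¹ ∈ S) ∧ x = g * s * g⁻¹}

/-- The conjugation-invariant word norm associated to a normally generating set `S`:
the least `k` such that `g` is a product of `k` conjugates of elements of `S ∪ S⁻¹`. -/
noncomputable def ciNorm {G : Type*} [Group G] (S : Set G) (g : G) : ℕ :=
  sInf {k | ∃ f : Fin k → G, (∀ i, f i ∈ conjGens S) ∧ (List.ofFn f).prod = g}

/-- The bi-invariant word metric associated to `S`. -/
noncomputable def ciDist {G : Type*} [Group G] (S : Set G) (g h : G) : ℝ :=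
  (ciNorm S (g * h⁻¹) : ℝ)

/-- The bi-invariant word metric on the free group on `Fin n`,
associated with the standard generating set. -/
noncomputable def freeDist (n : ℕ) (g h : FreeGroup (Fin n)) : ℝ :=
  ciDist (Set.range (FreeGroup.of : Fin n → FreeGroup (Fin n))) g h

/-- A quasi-isometric embedding between spaces with distance functions `d₁`, `d₂`. -/
def IsQuasiIsometricEmbedding {X Y : Type*} (d₁ : X → X → ℝ) (d₂ : Y → Y → ℝ)
    (φ : X → Y) : Prop :=
  ∃ C > (0:ℝ), ∃ D ≥ (0:ℝ), ∀ x y : X,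
    (1/C) * d₁ x y - D ≤ d₂ (φ x) (φ y) ∧ d₂ (φ x) (φ y) ≤ C * d₁ x y + D

/-- Quasi-surjectivity of a map into a space with distance function `d₂`. -/
def IsQuasiSurjective {X Y : Type*} (d₂ : Y → Y → ℝ) (φ : X → Y) : Prop :=
  ∃ B ≥ (0:ℝ), ∀ y : Y, ∃ x : X, d₂ (φ x) y ≤ B

/-!
A homogeneous quasi-morphism is invariant under conjugation (conjugation changes it by at most
`2D`, and homogeneity scales this error by `n` on `n`-th powers), so it is bounded by `B` on
every conjugate of an element of `S ∪ S⁻¹`. Writing `g = x₁ ⋯ xₖ h` with `k = ‖g h⁻¹‖_S` such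
conjugates, peeling off one factor at a time costs at most `B + D`, whence
`|ψ g - ψ h| ≤ k (B + D) ≤ (B + 2D) d_S(g, h)`.
-/

theorem nonpos_of_forall_nat_mul_le {α : Type*} [Field α] [LinearOrder α] [IsStrictOrderedRing α]
    [Archimedean α] {a C : α} (h : ∀ n : ℕ, n * a ≤ C) : a ≤ 0 := by
  by_contra! ha
  obtain ⟨n, hn⟩ := exists_nat_gt (C / a)
  rw [div_lt_iff₀ ha] at hn
  exact (h n).not_gt hn

section conjGens

variable {G : Type*} [Group G] {S : Set G}

theorem conjGens_eq_conjugatesOfSet (S : Set G) :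
    conjGens S = Group.conjugatesOfSet (S ∪ S⁻¹) := by
  ext x
  simp only [conjGens, Group.mem_conjugatesOfSet_iff, isConj_iff, Set.mem_union, Set.mem_inv]
  constructor
  · rintro ⟨g, s, hs, rfl⟩
    exact ⟨s, hs, g, rfl⟩
  · rintro ⟨s, hs, g, rfl⟩
    exact ⟨g, s, hs, rfl⟩

theorem inv_mem_conjGens {x : G} (hx : x ∈ conjGens S) : x⁻¹ ∈ conjGens S := by
  obtain ⟨g, s, hs, rfl⟩ := hx
  exact ⟨g, s⁻¹, by rwa [inv_inv, or_comm], by group⟩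

theorem closure_conjGens_eq_top (hS : Subgroup.normalClosure S = ⊤) :
    Subgroup.closure (conjGens S) = ⊤ := by
  refine top_le_iff.mp (hS ▸ Subgroup.closure_mono ?_)
  rw [conjGens_eq_conjugatesOfSet]
  exact Group.conjugatesOfSet_mono Set.subset_union_left

theorem exists_list_conjGens_prod_eq (hS : Subgroup.normalClosure S = ⊤) (g : G) :
    ∃ L : List G, (∀ x ∈ L, x ∈ conjGens S) ∧ L.prod = g := by
  have hg : g ∈ (Subgroup.closure (conjGens S)).toSubmonoid := by
    simp [closure_conjGens_eq_top hS]
  rw [Subgroup.closure_toSubmonoid] at hg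
  obtain ⟨L, hL, rfl⟩ := Submonoid.exists_list_of_mem_closure hg
  refine ⟨L, fun x hx => ?_, rfl⟩
  rcases hL x hx with h | h
  · exact h
  · simpa using inv_mem_conjGens h

theorem exists_list_length_eq_ciNorm (hS : Subgroup.normalClosure S = ⊤) (g : G) :
    ∃ L : List G, (∀ x ∈ L, x ∈ conjGens S) ∧ L.length = ciNorm S g ∧ L.prod = g := by
  have hne : {k | ∃ f : Fin k → G, (∀ i, f i ∈ conjGens S) ∧ (List.ofFn f).prod = g}.Nonempty := by
    obtain ⟨L, hL, hprod⟩ := exists_list_conjGens_prod_eq hS g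
    exact ⟨L.length, L.get, fun i => hL _ (L.get_mem i), by simpa using hprod⟩
  obtain ⟨f, hf, hprod⟩ := Nat.sInf_mem hne
  refine ⟨List.ofFn f, ?_, List.length_ofFn, hprod⟩
  simpa [List.mem_ofFn] using hf

end conjGens

section Quasimorphism

variable {G : Type*} [Group G] {ψ : G → ℝ} {D : ℝ}

theorem abs_map_mul_sub_le (hdef : ∀ g h : G, |ψ g - ψ (g * h) + ψ h| ≤ D) (a b : G) :
    |ψ (a * b) - ψ a - ψ b| ≤ D := by
  rw [← abs_neg]
  convert hdef a b using 2
  ring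

theorem defect_nonneg (hdef : ∀ g h : G, |ψ g - ψ (g * h) + ψ h| ≤ D) : 0 ≤ D := by
  simpa using (abs_nonneg _).trans (hdef 1 1)

theorem abs_map_list_prod_mul_sub_le (hdef : ∀ g h : G, |ψ g - ψ (g * h) + ψ h| ≤ D) {B : ℝ}
    {L : List G} (hL : ∀ x ∈ L, |ψ x| ≤ B) (h : G) :
    |ψ (L.prod * h) - ψ h| ≤ L.length * (B + D) := by
  induction L with
  | nil => simp
  | cons a L ih =>
    have hL' : ∀ x ∈ L, |ψ x| ≤ B := fun x hx => hL x (List.mem_cons_of_mem a hx)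
    rw [List.prod_cons, mul_assoc, List.length_cons, Nat.cast_succ]
    calc |ψ (a * (L.prod * h)) - ψ h|
        = |(ψ (a * (L.prod * h)) - ψ a - ψ (L.prod * h)) + ψ a + (ψ (L.prod * h) - ψ h)| := by
          ring_nf
      _ ≤ |ψ (a * (L.prod * h)) - ψ a - ψ (L.prod * h)| + |ψ a| + |ψ (L.prod * h) - ψ h| :=
          abs_add_three _ _ _
      _ ≤ D + B + L.length * (B + D) := by
          gcongr
          · exact abs_map_mul_sub_le hdef _ _
          · exact hL a List.mem_cons_self
          · exact ih hL'
      _ = (L.length + 1) * (B + D) := by ring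

theorem map_inv_eq_neg (hhom : ∀ (g : G) (n : ℤ), ψ (g ^ n) = n * ψ g) (g : G) :
    ψ g⁻¹ = -ψ g := by
  simpa using hhom g (-1)

theorem abs_map_conj_sub_le (hdef : ∀ g h : G, |ψ g - ψ (g * h) + ψ h| ≤ D)
    (hhom : ∀ (g : G) (n : ℤ), ψ (g ^ n) = n * ψ g) (c x : G) :
    |ψ (c * x * c⁻¹) - ψ x| ≤ 2 * D := by
  calc |ψ (c * x * c⁻¹) - ψ x|
      = |(ψ (c * x * c⁻¹) - ψ (c * x) - ψ c⁻¹) + (ψ (c * x) - ψ c - ψ x)| := by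
        rw [map_inv_eq_neg hhom]; ring_nf
    _ ≤ |ψ (c * x * c⁻¹) - ψ (c * x) - ψ c⁻¹| + |ψ (c * x) - ψ c - ψ x| := abs_add_le _ _
    _ ≤ D + D := add_le_add (abs_map_mul_sub_le hdef _ _) (abs_map_mul_sub_le hdef _ _)
    _ = 2 * D := by ring

theorem map_conj_eq (hdef : ∀ g h : G, |ψ g - ψ (g * h) + ψ h| ≤ D)
    (hhom : ∀ (g : G) (n : ℤ), ψ (g ^ n) = n * ψ g) (c x : G) :
    ψ (c * x * c⁻¹) = ψ x := by
  suffices |ψ (c * x * c⁻¹) - ψ x| ≤ 0 by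
    linarith [abs_le.mp this]
  refine nonpos_of_forall_nat_mul_le (C := 2 * D) fun n => ?_
  have hn := abs_map_conj_sub_le hdef hhom c (x ^ (n : ℤ))
  rwa [← conj_zpow, hhom, hhom, ← mul_sub, abs_mul, Int.cast_natCast, Nat.abs_cast] at hn

theorem abs_map_le_of_mem_conjGens (hdef : ∀ g h : G, |ψ g - ψ (g * h) + ψ h| ≤ D)
    (hhom : ∀ (g : G) (n : ℤ), ψ (g ^ n) = n * ψ g) {S : Set G} {B : ℝ}
    (hB : ∀ s ∈ S, |ψ s| ≤ B) {x : G} (hx : x ∈ conjGens S) : |ψ x| ≤ B := by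
  obtain ⟨c, s, hs | hs, rfl⟩ := hx
  · rw [map_conj_eq hdef hhom]
    exact hB s hs
  · rw [map_conj_eq hdef hhom, ← abs_neg, ← map_inv_eq_neg hhom]
    exact hB s⁻¹ hs

end Quasimorphism

/-- A homogeneous quasi-morphism with defect at most `D`, bounded by `B` on a normally
generating set `S`, is Lipschitz with constant `B + 2D` for the bi-invariant word metric. -/
theorem homogeneous_quasimorphism_lipschitz {G : Type*} [Group G] (S : Set G)
    (hS : Subgroup.normalClosure S = ⊤)
    (ψ : G → ℝ) (D B : ℝ)
    (hdef : ∀ g h : G, |ψ g - ψ (g * h) + ψ h| ≤ D)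
    (hhom : ∀ (g : G) (n : ℤ), ψ (g ^ n) = (n : ℝ) * ψ g)
    (hB : ∀ s ∈ S, |ψ s| ≤ B) :
    ∀ g h : G, |ψ g - ψ h| ≤ (B + 2 * D) * ciDist S g h := by
  intro g h
  obtain ⟨L, hL, hlen, hprod⟩ := exists_list_length_eq_ciNorm hS (g * h⁻¹)
  have hword := abs_map_list_prod_mul_sub_le hdef
    (fun x hx => abs_map_le_of_mem_conjGens hdef hhom hB (hL x hx)) h
  rw [hprod, inv_mul_cancel_right, hlen] at hword
  calc |ψ g - ψ h| ≤ ciNorm S (g * h⁻¹) * (B + D) := hword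
    _ ≤ (B + 2 * D) * ciDist S g h := by
      rw [ciDist, mul_comm]
      gcongr
      linarith [defect_nonneg hdef]
end

section
/- Let H and G be groups, each equipped with a bi-invariant metric (with associated norms ‖h‖_H = d_H(h,1) and ‖g‖_G = d_G(g,1)), and let ρ : H → G be a group homomorphism. Suppose there exist a Lipschitz function φ : H → ℝ satisfying φ(hⁿ) = n·φ(h) for all h ∈ H and all n > 0, and elements h₁, h₂ ∈ H such that φ(h₁) ≠ φ(h₂) and ρ(h₁), ρ(h₂) are conjugate in G. Then ρ is not a quasi-isometric embedding. -/
/-- `d` is a bi-invariant metric on the group `G`. -/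
structure IsBiInvMetric {G : Type*} [Group G] (d : G → G → ℝ) : Prop where
  refl : ∀ x, d x x = 0
  eq_of_dist_eq_zero : ∀ x y, d x y = 0 → x = y
  symm : ∀ x y, d x y = d y x
  triangle : ∀ x y z, d x z ≤ d x y + d y z
  left_invariant : ∀ g x y, d (g * x) (g * y) = d x y
  right_invariant : ∀ g x y, d (x * g) (y * g) = d x y

/-! A homogeneous Lipschitz function grows linearly along the powers `h₁ⁿ`, `h₂ⁿ`, so these
powers drift apart in `H`. Their images `ρ h₁ ^ n` and `g * ρ h₁ ^ n * g⁻¹` stay within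
`2 ‖g‖` of each other, because conjugates are uniformly close in a bi-invariant metric. -/

namespace IsBiInvMetric

variable {G : Type*} [Group G] {d : G → G → ℝ}

lemma nonneg (hd : IsBiInvMetric d) (x y : G) : 0 ≤ d x y := by
  have := hd.triangle x y x
  rw [hd.refl, hd.symm y x] at this
  linarith

lemma dist_conj_le (hd : IsBiInvMetric d) (g x : G) : d x (g * x * g⁻¹) ≤ 2 * d 1 g := by
  have hleft : d x (g * x) = d 1 g := by
    simpa using hd.right_invariant x 1 g
  have hright : d (g * x) (g * x * g⁻¹) = d 1 g := by
    simpa [hd.symm g 1] using hd.left_invariant (g * x * g⁻¹) g 1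
  linarith [hd.triangle x (g * x) (g * x * g⁻¹)]

end IsBiInvMetric

lemma IsQuasiIsometricEmbedding.exists_dist_le {X Y : Type*} {d₁ : X → X → ℝ}
    {d₂ : Y → Y → ℝ} {f : X → Y} (hf : IsQuasiIsometricEmbedding d₁ d₂ f) (K : ℝ) :
    ∃ B, ∀ x y, d₂ (f x) (f y) ≤ K → d₁ x y ≤ B := by
  obtain ⟨C, hC, D, -, hf⟩ := hf
  refine ⟨C * (K + D), fun x y hxy => ?_⟩
  have h := (hf x y).1
  rw [one_div, inv_mul_eq_div, div_sub' hC.ne', div_le_iff₀ hC] at h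
  nlinarith

lemma exists_lt_dist_pow_pow_of_separating {H : Type*} [Monoid H] {d : H → H → ℝ}
    (hd : ∀ x y, 0 ≤ d x y) {φ : H → ℝ} {C : ℝ}
    (hLip : ∀ x y : H, |φ x - φ y| ≤ C * d x y)
    (hhom : ∀ (h : H) (n : ℕ), 0 < n → φ (h ^ n) = (n : ℝ) * φ h)
    {h₁ h₂ : H} (hne : φ h₁ ≠ φ h₂) (B : ℝ) :
    ∃ n : ℕ, B < d (h₁ ^ n) (h₂ ^ n) := by
  set ε := |φ h₁ - φ h₂|
  have hε : 0 < ε := abs_pos.mpr (sub_ne_zero.mpr hne)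
  have hC : 0 < C := pos_of_mul_pos_left (hε.trans_le (hLip h₁ h₂)) (hd h₁ h₂)
  have hgrowth : ∀ n : ℕ, 0 < n → n * ε ≤ C * d (h₁ ^ n) (h₂ ^ n) := by
    intro n hn
    calc n * ε = |φ (h₁ ^ n) - φ (h₂ ^ n)| := by
          rw [hhom h₁ n hn, hhom h₂ n hn, ← mul_sub, abs_mul, Nat.abs_cast]
      _ ≤ C * d (h₁ ^ n) (h₂ ^ n) := hLip _ _
  obtain ⟨n, hn⟩ := exists_nat_gt (C * B / ε)
  refine ⟨n + 1, lt_of_mul_lt_mul_left ?_ hC.le⟩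
  calc C * B < (n + 1 : ℕ) * ε := by
        rw [div_lt_iff₀ hε] at hn
        push_cast
        nlinarith
    _ ≤ C * d (h₁ ^ (n + 1)) (h₂ ^ (n + 1)) := hgrowth (n + 1) n.succ_pos

/-- If there is a Lipschitz homogeneous function `φ : H → ℝ` separating two elements
`h₁, h₂` whose images under a homomorphism `ρ : H → G` are conjugate in `G`, then
`ρ` is not a quasi-isometric embedding (w.r.t. given bi-invariant metrics). -/
theorem not_quasiIsometricEmbedding_of_separating_function
    {H G : Type*} [Group H] [Group G]
    (dH : H → H → ℝ) (dG : G → G → ℝ)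
    (hdH : IsBiInvMetric dH) (hdG : IsBiInvMetric dG)
    (ρ : H →* G) (φ : H → ℝ) (C : ℝ)
    (hLip : ∀ x y : H, |φ x - φ y| ≤ C * dH x y)
    (hhom : ∀ (h : H) (n : ℕ), 0 < n → φ (h ^ n) = (n : ℝ) * φ h)
    (h₁ h₂ : H) (hne : φ h₁ ≠ φ h₂)
    (hconj : ∃ g : G, g * ρ h₁ * g⁻¹ = ρ h₂) :
    ¬ IsQuasiIsometricEmbedding dH dG ρ := by
  intro hQI
  obtain ⟨g, hg⟩ := hconj
  obtain ⟨B, hB⟩ := hQI.exists_dist_le (2 * dG 1 g)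
  obtain ⟨n, hn⟩ := exists_lt_dist_pow_pow_of_separating hdH.nonneg hLip hhom hne B
  have hconj_pow : ρ (h₂ ^ n) = g * ρ (h₁ ^ n) * g⁻¹ := by
    rw [map_pow, map_pow, ← hg, conj_pow]
  have hclose : dG (ρ (h₁ ^ n)) (ρ (h₂ ^ n)) ≤ 2 * dG 1 g :=
    hconj_pow ▸ hdG.dist_conj_le g _
  exact (hB _ _ hclose).not_gt hn
end

section
/- Let H and G be groups with G equipped with a bi-invariant metric, and let ρ : H → G be a group homomorphism. Suppose there exists a Lipschitz function φ : G → ℝ satisfying φ(gⁿ) = n·φ(g) for all g ∈ G and all n > 0, such that φ is not identically zero but φ ∘ ρ = 0. Then ρ is not quasi-surjective: the distance from points of G to the image ρ(H) is unbounded. -/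
/-! A Lipschitz function `φ` vanishing on `ρ(H)` bounds the distance to `ρ(H)` from below:
`|φ g| ≤ C · d(ρ h, g)`. Homogeneity makes `|φ (g₀ⁿ)| = n |φ g₀|` grow without bound as soon as
`φ g₀ ≠ 0`, so the powers of `g₀` leave every bounded neighbourhood of `ρ(H)`. -/

theorem IsBiInvMetric.nonneg_s4 {G : Type*} [Group G] {d : G → G → ℝ} (hd : IsBiInvMetric d)
    (x y : G) : 0 ≤ d x y := by
  have h := hd.triangle x y x
  rw [hd.refl, hd.symm y x] at h
  linarith

theorem lipschitz_const_pos {X : Type*} {d : X → X → ℝ} {φ : X → ℝ} {C : ℝ}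
    (hd : ∀ x y, 0 ≤ d x y) (hLip : ∀ x y, |φ x - φ y| ≤ C * d x y)
    {x y : X} (hx : φ x = 0) (hy : φ y ≠ 0) : 0 < C := by
  by_contra! hC
  have h := hLip y x
  rw [hx, sub_zero] at h
  have := mul_nonpos_of_nonpos_of_nonneg hC (hd y x)
  exact hy (abs_nonpos_iff.mp (h.trans this))

section Homogeneous

variable {G : Type*} [Monoid G] {d : G → G → ℝ} {φ : G → ℝ} {C : ℝ}

theorem natCast_mul_abs_le_mul_dist_pow (hLip : ∀ x y, |φ x - φ y| ≤ C * d x y)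
    (hhom : ∀ (g : G) (n : ℕ), 0 < n → φ (g ^ n) = (n : ℝ) * φ g)
    {x : G} (hx : φ x = 0) (g : G) {n : ℕ} (hn : 0 < n) :
    (n : ℝ) * |φ g| ≤ C * d x (g ^ n) := by
  simpa [hx, hhom g n hn, abs_mul] using hLip x (g ^ n)

theorem exists_forall_le_dist_of_apply_eq_zero (hd : ∀ x y, 0 ≤ d x y)
    (hLip : ∀ x y, |φ x - φ y| ≤ C * d x y)
    (hhom : ∀ (g : G) (n : ℕ), 0 < n → φ (g ^ n) = (n : ℝ) * φ g)
    {g₀ : G} (hg₀ : φ g₀ ≠ 0) (B : ℝ) : ∃ g, ∀ x, φ x = 0 → B ≤ d x g := by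
  obtain ⟨n, hn⟩ := exists_nat_gt (B * C / |φ g₀|)
  refine ⟨g₀ ^ (n + 1), fun x hx => ?_⟩
  have hC : 0 < C := lipschitz_const_pos hd hLip hx hg₀
  have hlower := natCast_mul_abs_le_mul_dist_pow hLip hhom hx g₀ n.succ_pos
  rw [div_lt_iff₀ (abs_pos.mpr hg₀)] at hn
  refine le_of_mul_le_mul_left ?_ hC
  calc C * B = B * C := mul_comm C B
    _ ≤ ((n + 1 : ℕ) : ℝ) * |φ g₀| := by push_cast; linarith [abs_nonneg (φ g₀)]
    _ ≤ C * d x (g₀ ^ (n + 1)) := hlower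

end Homogeneous

theorem not_isQuasiSurjective_of_forall_exists_le_dist {X Y : Type*} {d : Y → Y → ℝ}
    {f : X → Y} (h : ∀ B : ℝ, ∃ y : Y, ∀ x : X, B ≤ d (f x) y) : ¬ IsQuasiSurjective d f := by
  rintro ⟨B, -, hB⟩
  obtain ⟨y, hy⟩ := h (B + 1)
  obtain ⟨x, hx⟩ := hB y
  linarith [hy x]

/-- If there is a nonzero Lipschitz homogeneous function `φ : G → ℝ` vanishing on the
image of a homomorphism `ρ : H → G`, then the distance to `ρ(H)` is unbounded and `ρ`
is not quasi-surjective (w.r.t. a given bi-invariant metric on `G`). -/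
theorem not_quasiSurjective_of_vanishing_function
    {H G : Type*} [Group H] [Group G]
    (dG : G → G → ℝ) (hdG : IsBiInvMetric dG)
    (ρ : H →* G) (φ : G → ℝ) (C : ℝ)
    (hLip : ∀ x y : G, |φ x - φ y| ≤ C * dG x y)
    (hhom : ∀ (g : G) (n : ℕ), 0 < n → φ (g ^ n) = (n : ℝ) * φ g)
    (hne : φ ≠ 0) (hker : ∀ h : H, φ (ρ h) = 0) :
    (∀ B : ℝ, ∃ g : G, ∀ h : H, B ≤ dG (ρ h) g) ∧
      ¬ IsQuasiSurjective dG ρ := by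
  obtain ⟨g₀, hg₀⟩ := Function.ne_iff.mp hne
  have hfar (B : ℝ) : ∃ g : G, ∀ h : H, B ≤ dG (ρ h) g := by
    obtain ⟨g, hg⟩ := exists_forall_le_dist_of_apply_eq_zero hdG.nonneg_s4 hLip hhom hg₀ B
    exact ⟨g, fun h => hg (ρ h) (hker h)⟩
  exact ⟨hfar, not_isQuasiSurjective_of_forall_exists_le_dist hfar⟩
end

section
/- Let w be a nontrivial cyclically reduced word in F_n. Then ψ_w(w^k) = k for every integer k > 0, and consequently the homogenisation satisfies ψ̄_w(w) = 1. -/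
/-- `L` contains `k` pairwise disjoint contiguous copies of `w`. -/
def DisjointOccurrences {α : Type*} (w L : List α) (k : ℕ) : Prop :=
  ∃ p : Fin k → ℕ, (∀ i, (L.drop (p i)).take w.length = w) ∧
    ∀ i j : Fin k, (i : ℕ) < (j : ℕ) → p i + w.length ≤ p j

/-- The little counting function `c_w`: the maximal number of pairwise disjoint
copies of the reduced word of `w` inside the reduced word of `g`. -/
noncomputable def littleCount {α : Type*} [DecidableEq α] (w g : FreeGroup α) : ℕ :=
  sSup {k | DisjointOccurrences w.toWord g.toWord k}

/-- The little counting quasi-morphism `ψ_w = c_w - c_{w⁻¹}`. -/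
noncomputable def littleQM {α : Type*} [DecidableEq α] (w g : FreeGroup α) : ℤ :=
  (littleCount w g : ℤ) - (littleCount w⁻¹ g : ℤ)

/-- A nontrivial element of a free group is cyclically reduced if the first letter
of its reduced word is not the inverse of the last letter. -/
def CyclicallyReduced {α : Type*} [DecidableEq α] (w : FreeGroup α) : Prop :=
  w ≠ 1 ∧ ∀ x ∈ w.toWord.head?, ∀ y ∈ w.toWord.getLast?, x ≠ (y.1, !y.2)

/-!
Since `w` is cyclically reduced, the reduced word of `wᵏ` is the concatenation `W ⋯ W` of `k`
copies of the reduced word `W` of `w`. These copies give `k` disjoint occurrences of `W`, and no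
more fit by length. Every subword of `W ⋯ W` of length `|W|` is a cyclic rotation
`W.drop r ++ W.take r` of `W`; if it were the formal inverse of `W`, comparing the first
`|W| - r` letters would make the nonempty reduced word `W.drop r` its own formal inverse, which
is impossible. So `w⁻¹` never occurs and `ψ_w(wᵏ) = k - 0`.
-/

open List FreeGroup

namespace List

variable {α : Type*}

theorem length_flatten_replicate (W : List α) (k : ℕ) :
    ((replicate k W).flatten).length = k * W.length := by
  simp

theorem getElem_flatten_replicate {W : List α} {k i : ℕ}
    (hi : i < ((replicate k W).flatten).length) :
    (replicate k W).flatten[i] = W[i % W.length]'(Nat.mod_lt _ (Nat.pos_of_ne_zero fun h => by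
      simp [h] at hi)) := by
  induction k generalizing i with
  | zero => simp at hi
  | succ k ih =>
    simp only [replicate_succ, flatten_cons, getElem_append]
    split_ifs with h
    · simp only [Nat.mod_eq_of_lt h]
    · simp only [ih, ← Nat.mod_eq_sub_mod (not_lt.1 h)]

theorem take_drop_flatten_replicate {W : List α} {k q : ℕ} (hq : q + W.length ≤ k * W.length) :
    (((replicate k W).flatten).drop q).take W.length = W.rotate q := by
  apply ext_getElem
  · simp only [length_take, length_drop, length_rotate, length_flatten_replicate]
    omega
  · intro i _ _
    simp only [getElem_take, getElem_drop, getElem_flatten_replicate, getElem_rotate, add_comm]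

theorem add_length_le_of_take_drop_eq {w L : List α} {q : ℕ} (hw : w ≠ [])
    (h : (L.drop q).take w.length = w) : q + w.length ≤ L.length := by
  have hlen := congrArg length h
  have hpos := length_pos_iff.2 hw
  simp only [length_take, length_drop] at hlen
  omega

end List

section DisjointOccurrences

variable {α : Type*}

theorem DisjointOccurrences.mul_length_le {w L : List α} {m : ℕ}
    (h : DisjointOccurrences w L m) : m * w.length ≤ L.length := by
  obtain ⟨p, hocc, hdisj⟩ := h
  rcases eq_or_ne w [] with rfl | hw
  · simp
  have hstart : ∀ i (hi : i < m), i * w.length ≤ p ⟨i, hi⟩ := by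
    intro i
    induction i with
    | zero => simp
    | succ i ih =>
      intro hi
      have := hdisj ⟨i, by omega⟩ ⟨i + 1, hi⟩ (by simp)
      have := ih (by omega)
      nlinarith
  cases m with
  | zero => simp
  | succ m =>
    have := hstart m (by omega)
    have := add_length_le_of_take_drop_eq hw (hocc ⟨m, by omega⟩)
    nlinarith

theorem disjointOccurrences_flatten_replicate (W : List α) (k : ℕ) :
    DisjointOccurrences W (replicate k W).flatten k := by
  refine ⟨fun i => i * W.length, fun i => ?_, fun i j hij => ?_⟩
  · have hi : (i : ℕ) + 1 ≤ k := i.isLt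
    rw [take_drop_flatten_replicate (by nlinarith)]
    change W.rotate (i * W.length) = W
    rw [mul_comm, rotate_length_mul]
  · nlinarith

end DisjointOccurrences

namespace FreeGroup

variable {α : Type*}

theorem IsReduced.eq_nil_of_invRev_eq_self {L : List (α × Bool)} (h : IsReduced L)
    (hL : invRev L = L) : L = [] := by
  induction L using List.bidirectionalRec with
  | nil => rfl
  | singleton a => simp [invRev, Prod.ext_iff] at hL
  | cons_append a l b ih =>
    have hinv : invRev (a :: (l ++ [b])) = (b.1, !b.2) :: (invRev l ++ [(a.1, !a.2)]) := by
      simp [invRev]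
    rw [hinv, cons.injEq] at hL
    obtain ⟨rfl, hl⟩ := hL
    obtain rfl : l = [] :=
      ih (h.infix ⟨[_], [b], rfl⟩) (append_inj_left hl (by simp [invRev_length]))
    simp [IsReduced] at h

theorem IsReduced.rotate_ne_invRev {W : List (α × Bool)} (h : IsReduced W) (hW : W ≠ [])
    (q : ℕ) : W.rotate q ≠ invRev W := by
  intro heq
  rw [rotate_eq_drop_append_take_mod] at heq
  set r := q % W.length
  have hr : r < W.length := Nat.mod_lt _ (length_pos_iff.2 hW)
  rw [← take_append_drop r W, invRev_append, take_append_drop] at heq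
  have hdrop : invRev (W.drop r) = W.drop r :=
    (append_inj_left heq (by simp [invRev_length])).symm
  have hnil := (h.infix (drop_suffix r W).isInfix).eq_nil_of_invRev_eq_self hdrop
  rw [drop_eq_nil_iff] at hnil
  omega

theorem IsReduced.not_disjointOccurrences_invRev {W : List (α × Bool)} (h : IsReduced W)
    (hW : W ≠ []) {k m : ℕ} (hm : DisjointOccurrences (invRev W) (replicate k W).flatten m) :
    m = 0 := by
  obtain ⟨p, hocc, -⟩ := hm
  by_contra hm0
  have hwin := hocc ⟨0, Nat.pos_of_ne_zero hm0⟩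
  have hq := add_length_le_of_take_drop_eq (by simpa using invRev_injective.ne hW) hwin
  rw [invRev_length, length_flatten_replicate] at hq
  rw [invRev_length] at hwin
  exact h.rotate_ne_invRev hW _ (take_drop_flatten_replicate hq ▸ hwin)

end FreeGroup

namespace CyclicallyReduced

variable {α : Type*} [DecidableEq α] {w : FreeGroup α}

theorem isCyclicallyReduced_toWord (hw : CyclicallyReduced w) :
    IsCyclicallyReduced w.toWord := by
  refine ⟨isReduced_toWord, fun a ha b hb hab => ?_⟩
  by_contra h
  exact hw.2 b hb a ha (Prod.ext hab.symm (Bool.eq_not.2 (Ne.symm h)))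

theorem toWord_pow (hw : CyclicallyReduced w) (k : ℕ) :
    (w ^ k).toWord = (replicate k w.toWord).flatten := by
  rw [FreeGroup.toWord_pow, (hw.isCyclicallyReduced_toWord.flatten_replicate k).isReduced.reduce_eq]

theorem toWord_ne_nil (hw : CyclicallyReduced w) : w.toWord ≠ [] :=
  fun h => hw.1 (toWord_eq_nil_iff.1 h)

theorem littleCount_pow (hw : CyclicallyReduced w) (k : ℕ) : littleCount w (w ^ k) = k := by
  rw [littleCount, hw.toWord_pow]
  refine IsGreatest.csSup_eq ⟨disjointOccurrences_flatten_replicate _ k, fun m hm => ?_⟩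
  have := hm.mul_length_le
  rw [length_flatten_replicate] at this
  exact Nat.le_of_mul_le_mul_right this (length_pos_iff.2 hw.toWord_ne_nil)

theorem littleCount_inv_pow (hw : CyclicallyReduced w) (k : ℕ) :
    littleCount w⁻¹ (w ^ k) = 0 := by
  rw [littleCount, toWord_inv, hw.toWord_pow]
  exact IsGreatest.csSup_eq ⟨⟨Fin.elim0, fun i => i.elim0, fun i => i.elim0⟩,
    fun m hm => (isReduced_toWord.not_disjointOccurrences_invRev hw.toWord_ne_nil hm).le⟩

theorem littleQM_pow (hw : CyclicallyReduced w) (k : ℕ) : littleQM w (w ^ k) = k := by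
  simp [littleQM, hw.littleCount_pow, hw.littleCount_inv_pow]

end CyclicallyReduced

/-- For a nontrivial cyclically reduced `w`, `ψ_w(wᵏ) = k` for all `k > 0`, and hence
the homogenisation satisfies `ψ̄_w(w) = 1`. -/
theorem littleQM_pow_self (n : ℕ) (w : FreeGroup (Fin n)) (hw : CyclicallyReduced w) :
    (∀ k : ℕ, 0 < k → littleQM w (w ^ k) = (k : ℤ)) ∧
    Filter.Tendsto (fun k : ℕ => (littleQM w (w ^ k) : ℝ) / (k : ℝ))
      Filter.atTop (nhds 1) := by
  refine ⟨fun k _ => hw.littleQM_pow k, tendsto_const_nhds.congr' ?_⟩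
  filter_upwards [Filter.eventually_ne_atTop 0] with k hk
  rw [hw.littleQM_pow, Int.cast_natCast, div_self (Nat.cast_ne_zero.2 hk)]
end

section
/- Let π : F_2 = ⟨a,b⟩ → ℤ/2 * ℤ/2 be the canonical surjection sending the free generators a, b to the two generators of order 2, and let G = ker(π). Then every element of F_2 lies at distance at most 2 from G with respect to the bi-invariant word metric on F_2 associated with {a,b}; in particular, the inclusion G → F_2 is quasi-surjective. -/
/-- The infinite dihedral group `ℤ/2 * ℤ/2`, the free product of two cyclic groups of order 2. -/
abbrev InfDihedral : Type := Monoid.CoprodI (fun _ : Fin 2 => Multiplicative (ZMod 2))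

/-- The canonical surjection `F₂ = ⟨a, b⟩ → ℤ/2 * ℤ/2` sending the free generators
to the two generators of order 2. -/
noncomputable def piMap : FreeGroup (Fin 2) →* InfDihedral :=
  FreeGroup.lift (fun i : Fin 2 =>
    Monoid.CoprodI.of (M := fun _ : Fin 2 => Multiplicative (ZMod 2)) (i := i)
      (Multiplicative.ofAdd (1 : ZMod 2)))

/-!
Write `A`, `B` for the two involutions generating `ℤ/2 * ℤ/2` and `t = A * B`. Since `A` and `B`
both invert `t` by conjugation, every element is `t ^ k` or a reflection `t ^ k * A`, and the
identities `t ^ j * A * t ^ (-j) = t ^ (2 * j) * A`, `t ^ (j + 1) * B * t ^ (-(j + 1)) =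
t ^ (2 * j + 1) * A` show that every reflection is the image of a conjugate of `a` or `b`. Hence `π y⁻¹` is the image
of a product `w` of at most two conjugates of generators, and `w * y ∈ ker π` lies at distance
`‖w‖ ≤ 2` from `y`.
-/

section ConjNorm

variable {G : Type*} [Group G] (S : Set G)

theorem conj_mem_conjGens (g : G) {s : G} (hs : s ∈ S) : g * s * g⁻¹ ∈ conjGens S :=
  ⟨g, s, Or.inl hs, rfl⟩

theorem mem_conjGens_of_mem {s : G} (hs : s ∈ S) : s ∈ conjGens S := by
  simpa using conj_mem_conjGens S 1 hs

theorem ciNorm_list_prod_le (l : List G) (hl : ∀ x ∈ l, x ∈ conjGens S) :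
    ciNorm S l.prod ≤ l.length :=
  Nat.sInf_le ⟨l.get, fun i => hl _ (List.get_mem l i), by rw [List.ofFn_get]⟩

theorem exists_mem_ker_ciDist_le {H : Type*} [Group H] (φ : G →* H) (n : ℕ)
    (hφ : ∀ z, ∃ w, φ w = z ∧ ciNorm S w ≤ n) (y : G) :
    ∃ x ∈ φ.ker, ciDist S x y ≤ n := by
  obtain ⟨w, hw, hnorm⟩ := hφ (φ y)⁻¹
  refine ⟨w * y, by rw [MonoidHom.mem_ker, map_mul, hw, inv_mul_cancel], ?_⟩
  rw [ciDist, mul_inv_cancel_right]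
  exact_mod_cast hnorm

end ConjNorm

section Inverting

variable {H : Type*} [Group H] {A t : H}

theorem mul_zpow_of_conj_eq_inv (hA : A * t * A⁻¹ = t⁻¹) (k : ℤ) :
    A * t ^ k = t ^ (-k) * A := by
  rw [← inv_zpow', ← hA, conj_zpow, inv_mul_cancel_right]

theorem zpow_mul_mul_zpow_inv_of_conj_eq_inv (hA : A * t * A⁻¹ = t⁻¹) (j : ℤ) :
    t ^ j * A * (t ^ j)⁻¹ = t ^ (j + j) * A := by
  rw [← zpow_neg, mul_assoc, mul_zpow_of_conj_eq_inv hA, neg_neg, ← mul_assoc, zpow_add]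

end Inverting

namespace InfDihedral

noncomputable def gen (i : Fin 2) : InfDihedral :=
  Monoid.CoprodI.of (M := fun _ : Fin 2 => Multiplicative (ZMod 2)) (i := i)
    (Multiplicative.ofAdd 1)

theorem gen_mul_self (i : Fin 2) : gen i * gen i = 1 := by
  rw [gen, ← map_mul]
  exact map_one _

theorem gen_inv (i : Fin 2) : (gen i)⁻¹ = gen i :=
  inv_eq_of_mul_eq_one_right (gen_mul_self i)

theorem gen_conj_eq_inv (i : Fin 2) :
    gen i * (gen 0 * gen 1) * (gen i)⁻¹ = (gen 0 * gen 1)⁻¹ := by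
  rw [gen_inv, mul_inv_rev, gen_inv, gen_inv]
  match i with
  | 0 => rw [← mul_assoc, gen_mul_self, one_mul]
  | 1 => rw [mul_assoc, mul_assoc, gen_mul_self, mul_one]

theorem eq_zpow_or_eq_zpow_mul (z : InfDihedral) :
    ∃ k : ℤ, z = (gen 0 * gen 1) ^ k ∨ z = (gen 0 * gen 1) ^ k * gen 0 := by
  have hA := mul_zpow_of_conj_eq_inv (gen_conj_eq_inv 0)
  induction z using Monoid.CoprodI.induction_on with
  | one => exact ⟨0, .inl (zpow_zero _).symm⟩
  | of i m =>
    obtain rfl | rfl : m = 1 ∨ m = Multiplicative.ofAdd 1 := by revert m; decide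
    · exact ⟨0, .inl (by simp)⟩
    · fin_cases i
      · exact ⟨0, .inr (by simp [gen])⟩
      · refine ⟨-1, .inr ?_⟩
        rw [zpow_neg_one, mul_inv_rev, gen_inv, gen_inv, mul_assoc, gen_mul_self, mul_one]
        rfl
  | mul x y hx hy =>
    obtain ⟨k, rfl | rfl⟩ := hx <;> obtain ⟨j, rfl | rfl⟩ := hy
    · exact ⟨k + j, .inl (zpow_add _ _ _).symm⟩
    · exact ⟨k + j, .inr (by rw [zpow_add, mul_assoc])⟩
    · exact ⟨k + -j, .inr (by rw [mul_assoc, hA, ← mul_assoc, zpow_add])⟩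
    · refine ⟨k + -j, .inl ?_⟩
      rw [mul_assoc, ← mul_assoc (gen 0), hA, mul_assoc _ (gen 0), gen_mul_self, mul_one,
        zpow_add]

end InfDihedral

open InfDihedral

theorem piMap_of (i : Fin 2) : piMap (FreeGroup.of i) = gen i :=
  FreeGroup.lift_apply_of

theorem exists_conjGens_piMap_eq_reflection (k : ℤ) :
    ∃ c ∈ conjGens (Set.range (FreeGroup.of : Fin 2 → FreeGroup (Fin 2))),
      piMap c = (gen 0 * gen 1) ^ k * gen 0 := by
  set r : FreeGroup (Fin 2) := FreeGroup.of 0 * FreeGroup.of 1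
  have hr : piMap r = gen 0 * gen 1 := by simp only [r, map_mul, piMap_of]
  have hconj (j : ℤ) (i : Fin 2) : piMap (r ^ j * FreeGroup.of i * (r ^ j)⁻¹) =
      (gen 0 * gen 1) ^ (j + j) * gen i := by
    rw [map_mul, map_mul, map_inv, map_zpow, hr, piMap_of,
      zpow_mul_mul_zpow_inv_of_conj_eq_inv (gen_conj_eq_inv i)]
  obtain ⟨j, rfl | rfl⟩ := Int.even_or_odd' k
  · exact ⟨_, conj_mem_conjGens _ (r ^ j) ⟨0, rfl⟩, by rw [hconj, two_mul]⟩
  · refine ⟨_, conj_mem_conjGens _ (r ^ (j + 1)) ⟨1, rfl⟩, ?_⟩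
    rw [hconj, show j + 1 + (j + 1) = 2 * j + 1 + 1 by ring, zpow_add_one, mul_assoc,
      mul_assoc, gen_mul_self, mul_one]

theorem exists_piMap_eq_ciNorm_le_two (z : InfDihedral) :
    ∃ w, piMap w = z ∧
      ciNorm (Set.range (FreeGroup.of : Fin 2 → FreeGroup (Fin 2))) w ≤ 2 := by
  obtain ⟨k, rfl | rfl⟩ := eq_zpow_or_eq_zpow_mul z <;>
    obtain ⟨c, hc, hπc⟩ := exists_conjGens_piMap_eq_reflection k
  · refine ⟨c * FreeGroup.of 0, by rw [map_mul, hπc, piMap_of, mul_assoc, gen_mul_self,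
      mul_one], ?_⟩
    simpa using ciNorm_list_prod_le _ [c, FreeGroup.of 0]
      (by simpa [hc] using mem_conjGens_of_mem _ (Set.mem_range_self 0))
  · exact ⟨c, hπc, by simpa using (ciNorm_list_prod_le _ [c] (by simpa)).trans one_le_two⟩

/-- Every element of `F₂` lies at distance at most 2 from `G = ker(π : F₂ → ℤ/2 * ℤ/2)`
for the bi-invariant word metric; in particular the inclusion `G → F₂` is
quasi-surjective. -/
theorem kernel_to_infDihedral_quasiSurjective :
    (∀ y : FreeGroup (Fin 2), ∃ x ∈ piMap.ker, freeDist 2 x y ≤ 2) ∧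
    IsQuasiSurjective (freeDist 2)
      (fun x : piMap.ker => (x : FreeGroup (Fin 2))) := by
  have near (y : FreeGroup (Fin 2)) : ∃ x ∈ piMap.ker, freeDist 2 x y ≤ 2 := by
    exact_mod_cast exists_mem_ker_ciDist_le _ piMap 2 exists_piMap_eq_ciNorm_le_two y
  refine ⟨near, 2, zero_le_two, fun y => ?_⟩
  obtain ⟨x, hx, hxy⟩ := near y
  exact ⟨⟨x, hx⟩, hxy⟩
end

section
/- Let π : F_2 = ⟨a,b⟩ → ℤ/2 * ℤ/2 be the canonical surjection and G = ker(π). The elements a²b² and ab²a of F_2 both lie in G, they are conjugate in F_2 (indeed ab²a = a⁻¹(a²b²)a), but they are not conjugate in G. -/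
/-!
Map `F₂` to `S₃` by `φ : a ↦ t = (0 1)` and `b ↦ c = (0 1 2)`. Then `a²b² ↦ c²` and `ab²a ↦ t c² t`,
so every permutation conjugating the first image to the second lies in `t · C(c²) = t · A₃` and
is odd. On the other hand `sign ∘ φ`, like every homomorphism `F₂ → ℤˣ`, factors through
`ℤ/2 * ℤ/2`, so it is trivial on `G = ker π`.
-/

open Equiv Equiv.Perm

theorem not_exists_conj_mem_of_map {F K M : Type*} [Group F] [Group K] [Group M]
    {N : Subgroup F} (φ : F →* K) (χ : K →* M) (hN : N ≤ (χ.comp φ).ker) {x y : F} {t : K}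
    (ht : t * φ x * t⁻¹ = φ y) (hχt : χ t ≠ 1)
    (hcent : Subgroup.centralizer {φ x} ≤ χ.ker) :
    ¬ ∃ v ∈ N, v * x * v⁻¹ = y := by
  rintro ⟨v, hvN, rfl⟩
  have hvt : t⁻¹ * φ v ∈ Subgroup.centralizer {φ x} := by
    rw [Subgroup.mem_centralizer_singleton_iff]
    simp only [map_mul, map_inv] at ht
    calc t⁻¹ * φ v * φ x = t⁻¹ * (φ v * φ x * (φ v)⁻¹) * φ v := by group
      _ = φ x * (t⁻¹ * φ v) := by rw [← ht]; group
  have hv : χ (φ v) = 1 := hN hvN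
  apply hχt
  simpa [hv] using hcent hvt

def unitsPowHom (u : ℤˣ) : Multiplicative (ZMod 2) →* ℤˣ where
  toFun z := u ^ z.toAdd
  map_one' := uzpow_zero u
  map_mul' z w := uzpow_add u z.toAdd w.toAdd

theorem ker_piMap_le_ker (ψ : FreeGroup (Fin 2) →* ℤˣ) : piMap.ker ≤ ψ.ker := by
  have hfactor :
      (Monoid.CoprodI.lift fun i => unitsPowHom (ψ (FreeGroup.of i))).comp piMap = ψ := by
    ext i
    simp [piMap, unitsPowHom]
  intro v hv
  rw [MonoidHom.mem_ker] at hv ⊢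
  rw [← hfactor, MonoidHom.comp_apply, hv, map_one]

theorem piMap_of_sq_eq_one (i : Fin 2) : piMap (FreeGroup.of i) ^ 2 = 1 := by
  rw [piMap, FreeGroup.lift_apply_of, ← map_pow]
  exact map_eq_one_iff _ (Monoid.CoprodI.of_injective i) |>.mpr (by decide)

theorem centralizer_finRotate_three_sq_le_alternatingGroup :
    Subgroup.centralizer {finRotate 3 ^ 2} ≤ alternatingGroup (Fin 3) := by
  intro w hw
  rw [Subgroup.mem_centralizer_singleton_iff] at hw
  rw [mem_alternatingGroup]
  revert w
  decide

noncomputable def toPermThree : FreeGroup (Fin 2) →* Perm (Fin 3) :=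
  FreeGroup.lift ![swap 0 1, finRotate 3]

theorem toPermThree_of_zero : toPermThree (FreeGroup.of 0) = swap 0 1 :=
  FreeGroup.lift_apply_of

theorem toPermThree_of_one : toPermThree (FreeGroup.of 1) = finRotate 3 :=
  FreeGroup.lift_apply_of

/-- The elements `a²b²` and `ab²a` of `F₂` both lie in `G = ker(π : F₂ → ℤ/2 * ℤ/2)`,
are conjugate in `F₂` (indeed `ab²a = a⁻¹(a²b²)a`), but are not conjugate in `G`. -/
theorem conjugate_in_F2_not_in_kernel :
    (FreeGroup.of (0 : Fin 2)) ^ 2 * (FreeGroup.of (1 : Fin 2)) ^ 2 ∈ piMap.ker ∧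
    (FreeGroup.of (0 : Fin 2)) * (FreeGroup.of (1 : Fin 2)) ^ 2 *
      (FreeGroup.of (0 : Fin 2)) ∈ piMap.ker ∧
    (FreeGroup.of (0 : Fin 2)) * (FreeGroup.of (1 : Fin 2)) ^ 2 *
        (FreeGroup.of (0 : Fin 2)) =
      (FreeGroup.of (0 : Fin 2))⁻¹ *
        ((FreeGroup.of (0 : Fin 2)) ^ 2 * (FreeGroup.of (1 : Fin 2)) ^ 2) *
        (FreeGroup.of (0 : Fin 2)) ∧
    ¬ ∃ v ∈ piMap.ker,
        v * ((FreeGroup.of (0 : Fin 2)) ^ 2 * (FreeGroup.of (1 : Fin 2)) ^ 2) * v⁻¹ =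
          (FreeGroup.of (0 : Fin 2)) * (FreeGroup.of (1 : Fin 2)) ^ 2 *
            (FreeGroup.of (0 : Fin 2)) := by
  refine ⟨?_, ?_, by group, ?_⟩
  · simp [MonoidHom.mem_ker, piMap_of_sq_eq_one]
  · simp [MonoidHom.mem_ker, piMap_of_sq_eq_one, ← pow_two]
  have hx : toPermThree (FreeGroup.of 0 ^ 2 * FreeGroup.of 1 ^ 2) = finRotate 3 ^ 2 := by
    simp only [map_mul, map_pow, toPermThree_of_zero, toPermThree_of_one]
    decide
  refine not_exists_conj_mem_of_map toPermThree sign (ker_piMap_le_ker _) (t := swap 0 1)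
    ?_ (by simp) (hx ▸ centralizer_finRotate_three_sq_le_alternatingGroup)
  simp only [map_mul, map_pow, toPermThree_of_zero, toPermThree_of_one]
  decide
end

section
/- Let n ≥ 1 and let G ≤ F_n be a finitely generated subgroup of infinite index. Then G admits a killer word: there exists a nonempty reduced word w in F_n such that w does not occur as a contiguous subword of the reduced word representing any element of G. -/
/-!
Let `F` act on the left cosets `F ⧸ G`. If `G` is generated by a finite set `T`, the cosets `s G`,
`s` a suffix of the reduced word of some `g ∈ G`, form a finite set `S`: free reduction only cancels
adjacent letters, so a suffix of the reduced word of `t₁ ⋯ tₖ` (`tᵢ ∈ T ∪ T⁻¹`) equals in `F` a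
suffix of the unreduced concatenation, whose coset is that of a suffix of a single `tᵢ`.

Since `F ⧸ G` is infinite, for every coset `y` and letter `d` infinitely many cosets `q y` are
reached by words `q` with `q d` reduced: otherwise `d` would act periodically on `y`, and the
finite set of such cosets would be invariant under every letter, hence everything. So any reduced
word can be extended to the left until it carries a given coset out of `S`; treating the points
of `S` one by one gives a reduced `w` such that every point of `S` leaves `S` along some suffix
of `w`. If the reduced word of `g ∈ G` were `p w r`, then `r G ∈ S`, and for the suffix `q` of `w`
carrying `r G` out of `S`, `q r` would be a suffix of `g` with `q r G ∉ S`.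
-/

open FreeGroup List MulAction

theorem List.IsSuffix.suffix_or_eq_append_of_append {β : Type*} {s a b : List β}
    (h : s <:+ a ++ b) : s <:+ b ∨ ∃ a', a' <:+ a ∧ s = a' ++ b := by
  obtain ⟨t, ht⟩ := h
  rcases List.append_eq_append_iff.mp ht with ⟨a', rfl, rfl⟩ | ⟨c', rfl, rfl⟩
  · exact Or.inr ⟨a', suffix_append _ _, rfl⟩
  · exact Or.inl (suffix_append _ _)

namespace FreeGroup

variable {α : Type*}

theorem mk_cons_cons_inv (a : α × Bool) (L : List (α × Bool)) :
    mk (a :: (a.1, !a.2) :: L) = mk L :=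
  Quot.sound Red.Step.cons_not

theorem eq_inv_of_not_isReduced_cons {a b : α × Bool} {L : List (α × Bool)}
    (hL : IsReduced (b :: L)) (h : ¬IsReduced (a :: b :: L)) : b = (a.1, !a.2) := by
  rw [isReduced_cons_cons, not_and_or, Classical.not_imp] at h
  obtain ⟨h₁, h₂⟩ := h.resolve_right (not_not.2 hL)
  exact Prod.ext h₁.symm (Bool.eq_not_iff.2 (Ne.symm h₂))

theorem Red.Step.exists_suffix_mk_eq {L₁ L₂ s : List (α × Bool)} (h : Red.Step L₁ L₂)
    (hs : s <:+ L₂) : ∃ s', s' <:+ L₁ ∧ mk s' = mk s := by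
  cases h with
  | not =>
    rcases hs.suffix_or_eq_append_of_append with hs | ⟨a', ha', rfl⟩
    · exact ⟨s, hs.trans (suffix_append_of_suffix (suffix_append [_, _] _)), rfl⟩
    · exact ⟨a' ++ _, suffix_append_self_iff.2 ha', Quot.sound Red.Step.not⟩

theorem Red.exists_suffix_mk_eq {L₁ L₂ s : List (α × Bool)} (h : Red L₁ L₂)
    (hs : s <:+ L₂) : ∃ s', s' <:+ L₁ ∧ mk s' = mk s := by
  induction h generalizing s with
  | refl => exact ⟨s, hs, rfl⟩
  | tail _ step ih =>
    obtain ⟨s₁, hs₁, h₁⟩ := step.exists_suffix_mk_eq hs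
    obtain ⟨s', hs', h'⟩ := ih hs₁
    exact ⟨s', hs', h'.trans h₁⟩

variable [DecidableEq α] {H : Subgroup (FreeGroup α)}

theorem exists_suffix_toWord_of_mem_closure {T : Set (FreeGroup α)} (hT : T ⊆ H)
    {g : FreeGroup α} (hg : g ∈ Submonoid.closure T) {s : List (α × Bool)}
    (hs : s <:+ g.toWord) :
    ∃ t ∈ insert 1 T, ∃ s', s' <:+ t.toWord ∧ (mk s' : FreeGroup α ⧸ H) = mk s := by
  induction hg using Submonoid.closure_induction generalizing s with
  | mem t ht => exact ⟨t, .inr ht, s, hs, rfl⟩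
  | one => exact ⟨1, .inl rfl, s, hs, rfl⟩
  | mul x y _ hy ihx ihy =>
    rw [toWord_mul] at hs
    obtain ⟨s₁, hs₁, hmk⟩ := reduce.red.exists_suffix_mk_eq hs
    rw [← hmk]
    rcases hs₁.suffix_or_eq_append_of_append with hs₁ | ⟨a, ha, rfl⟩
    · exact ihy hs₁
    · obtain ⟨t, ht, s', hs', h'⟩ := ihx ha
      refine ⟨t, ht, s', hs', ?_⟩
      rw [h', ← mul_mk, mk_toWord, QuotientGroup.mk_mul_of_mem _ (Submonoid.closure_le.2 hT hy)]

/-- The vertices of the Stallings core graph of `H`, seen among the left cosets: the suffix `s` of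
the reduced word of `g ∈ H` ends at the coset `s H`. -/
def suffixCosets (H : Subgroup (FreeGroup α)) : Set (FreeGroup α ⧸ H) :=
  {c | ∃ g ∈ H, ∃ s, s <:+ g.toWord ∧ c = mk s}

theorem suffixCosets_finite (hH : H.FG) : (suffixCosets H).Finite := by
  obtain ⟨T, rfl, hT⟩ := Subgroup.fg_iff _ |>.1 hH
  have hsub : suffixCosets (Subgroup.closure T) ⊆
      (fun s => (mk s : FreeGroup α ⧸ _)) '' ⋃ t ∈ insert 1 (T ∪ T⁻¹), {s | s <:+ t.toWord} := by
    rintro _ ⟨g, hg, s, hs, rfl⟩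
    rw [← Subgroup.mem_toSubmonoid, Subgroup.closure_toSubmonoid] at hg
    have hT : T ∪ T⁻¹ ⊆ Subgroup.closure T :=
      Set.union_subset Subgroup.subset_closure fun x hx => by
        simpa using inv_mem (Subgroup.subset_closure (Set.mem_inv.1 hx))
    obtain ⟨t, ht, s', hs', h⟩ := exists_suffix_toWord_of_mem_closure hT hg hs
    exact ⟨s', Set.mem_biUnion ht hs', h⟩
  refine (((hT.union hT.inv).insert 1).biUnion fun t _ => ?_).image _ |>.subset hsub
  simpa only [← mem_tails] using t.toWord.tails.finite_toSet

end FreeGroup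

theorem MulAction.exists_pow_smul_eq_inv_smul {G X : Type*} [Group G] [MulAction G X] {g : G}
    {y : X} (h : (Set.range fun k : ℕ => g ^ k • y).Finite) : ∃ k : ℕ, g⁻¹ • y = g ^ k • y := by
  obtain ⟨i, j, hij, heq⟩ := h.exists_lt_map_eq_of_forall_mem (Set.mem_range_self (f := _))
  obtain ⟨k, rfl⟩ := Nat.exists_eq_add_of_lt hij
  have hper : g ^ (k + 1) • y = y := by
    rwa [add_assoc, pow_add, mul_smul, eq_comm, smul_left_cancel_iff] at heq
  refine ⟨k, ?_⟩
  conv_lhs => rw [← hper, pow_succ', mul_smul, inv_smul_smul]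

namespace FreeGroup

variable {α X : Type*} [MulAction (FreeGroup α) X]

theorem smul_mem_of_forall_letter {C : Set X} (hC : ∀ c : α × Bool, ∀ z ∈ C, mk [c] • z ∈ C)
    (g : FreeGroup α) {z : X} (hz : z ∈ C) : g • z ∈ C := by
  induction g using FreeGroup.induction_on generalizing z with
  | C1 => rwa [one_smul]
  | of a => exact hC (a, true) z hz
  | inv_of a _ => exact hC (a, false) z hz
  | mul g h hg hh => rw [mul_smul]; exact hg (hh hz)

def cone (d : α × Bool) (y : X) : Set X :=
  {z | ∃ q, IsReduced (q ++ [d]) ∧ z = mk q • y}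

variable {d : α × Bool} {y : X}

theorem letter_smul_mem_cone (hy : (mk [d])⁻¹ • y ∈ cone d y) (c : α × Bool) {z : X}
    (hz : z ∈ cone d y) : mk [c] • z ∈ cone d y := by
  obtain ⟨q, hq, rfl⟩ := hz
  rw [smul_smul, mul_mk]
  by_cases hc : IsReduced (c :: q ++ [d])
  · exact ⟨c :: q, hc, rfl⟩
  cases q with
  | nil =>
    have hd : d = (c.1, !c.2) := eq_inv_of_not_isReduced_cons IsReduced.singleton hc
    have hcd : mk [c] = (mk [d])⁻¹ := eq_inv_of_mul_eq_one_left (by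
      rw [mul_mk, hd]; exact mk_cons_cons_inv c [])
    rwa [append_nil, hcd]
  | cons b q =>
    have hb : b = (c.1, !c.2) := eq_inv_of_not_isReduced_cons hq hc
    refine ⟨q, hq.infix (suffix_cons b _).isInfix, ?_⟩
    rw [List.singleton_append, hb, mk_cons_cons_inv]

variable [IsPretransitive (FreeGroup α) X] [Infinite X]

theorem cone_infinite (d : α × Bool) (y : X) : (cone d y).Infinite := by
  intro hfin
  have hpow (k : ℕ) : mk [d] ^ k • y ∈ cone d y := by
    refine ⟨replicate k d, ?_, by rw [pow_mk, flatten_replicate_singleton]⟩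
    rw [← replicate_succ']
    exact isChain_replicate_of_rel _ fun _ => rfl
  obtain ⟨k, hk⟩ := exists_pow_smul_eq_inv_smul (hfin.subset (Set.range_subset_iff.2 hpow))
  have hall (z : X) : z ∈ cone d y := by
    obtain ⟨g, rfl⟩ := exists_smul_eq (FreeGroup α) y z
    exact smul_mem_of_forall_letter (letter_smul_mem_cone (hk ▸ hpow k)) g
      ⟨[], IsReduced.singleton, (one_smul _ y).symm⟩
  exact hfin.not_infinite (Set.eq_univ_of_forall hall ▸ Set.infinite_univ)

variable [DecidableEq α] {S : Set X}

theorem exists_isReduced_append_smul_notMem (hS : S.Finite) (x : X) {w : List (α × Bool)}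
    (hw : IsReduced w) : ∃ q, IsReduced (q ++ w) ∧ mk (q ++ w) • x ∉ S := by
  cases w with
  | nil =>
    obtain ⟨z, hz⟩ := hS.infinite_compl.nonempty
    obtain ⟨g, rfl⟩ := exists_smul_eq (FreeGroup α) x z
    exact ⟨g.toWord, by simpa using isReduced_toWord, by rwa [append_nil, mk_toWord]⟩
  | cons d w =>
    obtain ⟨_, ⟨q, hq, rfl⟩, hqS⟩ := ((cone_infinite d (mk (d :: w) • x)).sdiff hS).nonempty
    refine ⟨q, by simpa using hq.append_overlap hw (by simp), ?_⟩
    rwa [← mul_mk, mul_smul]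

theorem exists_isReduced_suffix_smul_notMem (hS : S.Finite) {P : Set X} (hP : P.Finite)
    {w₀ : List (α × Bool)} (hw₀ : IsReduced w₀) :
    ∃ w, IsReduced w ∧ w₀ <:+ w ∧ ∀ x ∈ P, ∃ q, q <:+ w ∧ mk q • x ∉ S := by
  induction P, hP using Set.Finite.induction_on generalizing w₀ with
  | empty => exact ⟨w₀, hw₀, suffix_refl _, by simp⟩
  | @insert x P _ _ ih =>
    obtain ⟨q, hq, hx⟩ := exists_isReduced_append_smul_notMem hS x hw₀
    obtain ⟨w, hw, hsuf, hP⟩ := ih hq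
    refine ⟨w, hw, (suffix_append q w₀).trans hsuf, ?_⟩
    simp only [Set.mem_insert_iff, forall_eq_or_imp]
    exact ⟨⟨_, hsuf, hx⟩, hP⟩

end FreeGroup

theorem exists_killer_word_general (n : ℕ) (G : Subgroup (FreeGroup (Fin n)))
    (hfg : G.FG) (hinf : G.index = 0) :
    ∃ w : List (Fin n × Bool), w ≠ [] ∧ FreeGroup.reduce w = w ∧
      ∀ g ∈ G, ¬ w <:+: FreeGroup.toWord g := by
  have : Infinite (FreeGroup (Fin n) ⧸ G) := Subgroup.index_eq_zero_iff_infinite.1 hinf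
  have hS := suffixCosets_finite hfg
  have hmem {g s} (hg : g ∈ G) (hs : s <:+ g.toWord) :
      (mk s : FreeGroup (Fin n) ⧸ G) ∈ suffixCosets G :=
    ⟨g, hg, s, hs, rfl⟩
  obtain ⟨w, hw, -, hesc⟩ :=
    exists_isReduced_suffix_smul_notMem hS hS (IsReduced.nil (α := Fin n))
  refine ⟨w, ?_, hw.reduce_eq, ?_⟩
  · rintro rfl
    obtain ⟨q, hq, hqS⟩ := hesc _ (hmem (one_mem G) nil_suffix)
    rw [suffix_nil.1 hq] at hqS
    exact hqS ⟨1, one_mem G, [], nil_suffix, rfl⟩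
  · rintro g hg ⟨p, r, hpr⟩
    obtain ⟨q, hq, hqS⟩ := hesc _ (hmem hg ⟨p ++ w, hpr⟩)
    have hqr : q ++ r <:+ g.toWord :=
      (suffix_append_self_iff.2 hq).trans ⟨p, (append_assoc _ _ _).symm.trans hpr⟩
    refine hqS ⟨g, hg, q ++ r, hqr, ?_⟩
    rw [MulAction.Quotient.smul_coe, smul_eq_mul, mul_mk]

/-- Killer words: a finitely generated subgroup of infinite index in `F_n` admits a
nonempty reduced word that does not occur as a contiguous subword of the reduced word
of any of its elements. -/
theorem exists_killer_word (n : ℕ) (hn : 1 ≤ n) (G : Subgroup (FreeGroup (Fin n)))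
    (hfg : G.FG) (hinf : G.index = 0) :
    ∃ w : List (Fin n × Bool), w ≠ [] ∧ FreeGroup.reduce w = w ∧
      ∀ g ∈ G, ¬ w <:+: FreeGroup.toWord g :=
  exists_killer_word_general n G hfg hinf
end
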